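/- arXiv:2104.12202 — 2 statements merged into one kernel-verified Lean document; each statement's English description precedes it below -/
import Mathlib

section
/- Let f : Fin 3 × Fin 3 → Fin 3 × Fin 3 be as follows (first component a color 0 = NIL, 1 = RED, 2 = BLUE; second a position 0 = C, 1 = C', 2 = C''): f(0,0) = (1,1), f(1,1) = (2,2), f(2,2) = (2,1), f(2,1) = (0,0), and f(s) = s otherwise. Let σ : ℕ → Bool be any schedule with σ(n) = true for infinitely many n (fairness: the moving robot is activated infinitely often), and define the run s : ℕ → Fin 3 × Fin 3 by s(0) = (0,0) and s(n+1) = f(s(n)) if σ(n) = true, s(n+1) = s(n) otherwise. Then for every n, s(n) = f^[k](0,0) where k is the number of indices m < n with σ(m) = true; consequently the position component of the run attains each of the values 0, 1, 2 at infinitely many times n, in the cyclic order 0, 1, 2, 1, 0, 1, 2, 1, … of its changes. -/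
/-- The state-transition function of robot `z` in Algorithm AlgOC:
first component a color (0 = NIL, 1 = RED, 2 = BLUE),
second component a position (0 = C, 1 = C', 2 = C''). -/
def algOCStep : Fin 3 × Fin 3 → Fin 3 × Fin 3 := fun s =>
  if s = (0, 0) then (1, 1)
  else if s = (1, 1) then (2, 2)
  else if s = (2, 2) then (2, 1)
  else if s = (2, 1) then (0, 0)
  else s

/-! Only robot `z` ever acts, so the run is the orbit of `algOCStep` slowed down by the idle steps:
after `n` rounds it has taken exactly `Nat.count σ n` steps. The orbit of `(NIL, C)` is the
4-cycle `(0,0) → (1,1) → (2,2) → (2,1) → (0,0)`, whose positions are `0, 1, 2, 1`, and fairness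
makes `Nat.count σ` surjective, so every phase of the cycle recurs at arbitrarily late times. -/

theorem Nat.apply_eq_iterate_count {α : Type*} (f : α → α) (p : ℕ → Prop) [DecidablePred p]
    (s : ℕ → α) (hstep : ∀ n, s (n + 1) = if p n then f (s n) else s n) (n : ℕ) :
    s n = f^[Nat.count p n] (s 0) := by
  induction n with
  | zero => rfl
  | succ n ih =>
    rw [hstep, Nat.count_succ, ih]
    split_ifs <;> simp [Function.iterate_succ_apply']

theorem Nat.exists_le_count_eq_of_infinite {p : ℕ → Prop} [DecidablePred p]
    (hp : {n | p n}.Infinite) (k : ℕ) : ∃ n, k ≤ n ∧ Nat.count p n = k :=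
  ⟨Nat.nth p k, (Nat.count_nth_of_infinite hp k).ge.trans (Nat.count_le p),
    Nat.count_nth_of_infinite hp k⟩

theorem algOCStep_isPeriodicPt : Function.IsPeriodicPt algOCStep 4 (0, 0) := by
  decide

theorem algOCStep_iterate_snd (k : ℕ) :
    (algOCStep^[k] (0, 0)).2 = if k % 4 = 0 then 0 else if k % 4 = 2 then 2 else 1 := by
  rw [← algOCStep_isPeriodicPt.iterate_mod_apply]
  have hk : k % 4 < 4 := Nat.mod_lt k (by norm_num)
  interval_cases k % 4 <;> decide

/-- Under any fair schedule `σ` (true at infinitely many steps), the asynchronous run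
of Algorithm AlgOC started at `(NIL, C)` equals the `k`-th iterate of `algOCStep`
where `k` counts the activations so far; consequently the position component attains
each of the values 0, 1, 2 at infinitely many times, in the cyclic order
0, 1, 2, 1, 0, 1, 2, 1, … of its changes. -/
theorem algOC_async_run (σ : ℕ → Bool)
    (hfair : ∀ N : ℕ, ∃ n : ℕ, N ≤ n ∧ σ n = true)
    (s : ℕ → Fin 3 × Fin 3)
    (h0 : s 0 = (0, 0))
    (hstep : ∀ n : ℕ, s (n + 1) = if σ n = true then algOCStep (s n) else s n) :
    (∀ n : ℕ,
      s n = algOCStep^[((Finset.range n).filter (fun m => σ m = true)).card] (0, 0)) ∧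
    (∀ n : ℕ,
      (s n).2 =
        if ((Finset.range n).filter (fun m => σ m = true)).card % 4 = 0 then 0
        else if ((Finset.range n).filter (fun m => σ m = true)).card % 4 = 2 then 2
        else 1) ∧
    (∀ v : Fin 3, ∀ N : ℕ, ∃ n : ℕ, N ≤ n ∧ (s n).2 = v) := by
  have hcount : ∀ n, ((Finset.range n).filter (fun m => σ m = true)).card
      = Nat.count (fun m => σ m = true) n := fun n => (Nat.count_eq_card_filter_range _ n).symm
  have hrun : ∀ n, s n = algOCStep^[Nat.count (fun m => σ m = true) n] (0, 0) := fun n =>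
    h0 ▸ Nat.apply_eq_iterate_count algOCStep _ s hstep n
  have hinf : {n | σ n = true}.Infinite :=
    Nat.frequently_atTop_iff_infinite.mp (Filter.frequently_atTop.mpr hfair)
  refine ⟨fun n => hcount n ▸ hrun n, fun n => hcount n ▸ hrun n ▸ algOCStep_iterate_snd _, ?_⟩
  intro v N
  obtain ⟨r, hr⟩ : ∃ r, (if r % 4 = 0 then 0 else if r % 4 = 2 then 2 else 1 : Fin 3) = v := by
    fin_cases v
    exacts [⟨0, rfl⟩, ⟨1, rfl⟩, ⟨2, rfl⟩]
  obtain ⟨n, hn, hcn⟩ := Nat.exists_le_count_eq_of_infinite hinf (4 * N + r)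
  refine ⟨n, by omega, ?_⟩
  rw [hrun, hcn, algOCStep_iterate_snd, ← hr]
  simp only [Nat.mul_add_mod]
end

section
/- Let f : Bool × ℝ → Bool × ℝ be given by f(false, d) = (true, 2d) and f(true, d) = (false, d/2). Fix x₁ > 0 and x₂ > 0, let σ : ℕ → Set (Fin 2) be any schedule such that each i ∈ Fin 2 belongs to σ(n) for infinitely many n, and define runs s_i : ℕ → Bool × ℝ for i ∈ Fin 2 by s_i(0) = (false, x_i) and s_i(n+1) = f(s_i(n)) if i ∈ σ(n), s_i(n+1) = s_i(n) otherwise. Write d_i(n) for the second component of s_i(n). Then for each i ∈ Fin 2 there exists a strictly increasing sequence t : ℕ → ℕ such that for all k: d_i(t(2k)) = x_i, d_i(t(2k+1)) = 2x_i, d_i is monotone nondecreasing on the interval [t(2k), t(2k+1)], and d_i is monotone nonincreasing on the interval [t(2k+1), t(2k+2)]. -/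
/-!
Every state a terminal robot reaches is `(false, x)` or `(true, 2 * x)`, so its distance is a
function of its light, and each activation flips the light. By fairness the light changes
infinitely often; cutting time at the successive changes of the light gives the times `t j`,
between which the distance is constant, equal to `x` for even `j` and to `2 * x` for odd `j`.
-/

/-- The state-transition function of a terminal robot in Algorithm AlgoIOP:
first component the internal light (false = NIL, true = RED),
second component the distance to the middle robot. -/
noncomputable def algoIOPStep : Bool × ℝ → Bool × ℝ := fun s =>
  match s with
  | (false, d) => (true, 2 * d)
  | (true, d) => (false, d / 2)

theorem monotoneOn_Icc_of_eqOn_Ico {α β : Type*} [LinearOrder α] [Preorder β] {f : α → β}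
    {a c : α} (hf : ∀ n ∈ Set.Ico a c, f n = f a) (hac : f a ≤ f c) :
    MonotoneOn f (Set.Icc a c) := by
  intro u hu v hv huv
  rcases hv.2.lt_or_eq with hvc | rfl
  · rw [hf u ⟨hu.1, huv.trans_lt hvc⟩, hf v ⟨hv.1, hvc⟩]
  · rcases hu.2.lt_or_eq with huc | rfl
    · rwa [hf u ⟨hu.1, huc⟩]
    · exact le_rfl

theorem antitoneOn_Icc_of_eqOn_Ico {α β : Type*} [LinearOrder α] [Preorder β] {f : α → β}
    {a c : α} (hf : ∀ n ∈ Set.Ico a c, f n = f a) (hca : f c ≤ f a) :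
    AntitoneOn f (Set.Icc a c) :=
  monotoneOn_Icc_of_eqOn_Ico (β := βᵒᵈ) hf hca

theorem exists_strictMono_eqOn_Ico_of_frequently_ne {α : Type*} (b : ℕ → α)
    (hb : ∀ m, ∃ n, m < n ∧ b n ≠ b m) :
    ∃ t : ℕ → ℕ, StrictMono t ∧ t 0 = 0 ∧
      (∀ j, b (t (j + 1)) ≠ b (t j)) ∧ ∀ j, ∀ n ∈ Set.Ico (t j) (t (j + 1)), b n = b (t j) := by
  classical
  let next m := Nat.find (hb m)
  have next_spec (m : ℕ) : m < next m ∧ b (next m) ≠ b m := Nat.find_spec (hb m)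
  have eq_of_lt_next (m n : ℕ) (hmn : m ≤ n) (hn : n < next m) : b n = b m := by
    rcases hmn.eq_or_lt with rfl | hlt
    · rfl
    · by_contra h
      exact Nat.find_min (hb m) hn ⟨hlt, h⟩
  refine ⟨fun j => next^[j] 0, strictMono_nat_of_lt_succ fun j => ?_, rfl, fun j => ?_,
    fun j n hn => ?_⟩
  all_goals simp only [Function.iterate_succ_apply'] at *
  · exact (next_spec _).1
  · exact (next_spec _).2
  · exact eq_of_lt_next _ n hn.1 hn.2

theorem Bool.exists_lt_ne_of_flip {A : Set ℕ} (hA : ∀ N, ∃ n, N ≤ n ∧ n ∈ A) {c : ℕ → Bool}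
    (hflip : ∀ n ∈ A, c (n + 1) = !c n) (m : ℕ) : ∃ n, m < n ∧ c n ≠ c m := by
  obtain ⟨k, hmk, hk⟩ := hA m
  by_cases hck : c k = c m
  · exact ⟨k + 1, by omega, by simp [hflip k hk, hck]⟩
  · exact ⟨k, lt_of_le_of_ne hmk (by rintro rfl; exact hck rfl), hck⟩

theorem Bool.eq_decide_odd_of_ne_succ {c : ℕ → Bool} (h0 : c 0 = false)
    (hc : ∀ j, c (j + 1) ≠ c j) (j : ℕ) : c j = decide (Odd j) := by
  induction j with
  | zero => simp [h0]
  | succ j ih => simp [Bool.eq_not_iff.mpr (hc j), ih, Nat.odd_add_one, ← Nat.not_even_iff_odd]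

def algoIOPState (x : ℝ) (b : Bool) : Bool × ℝ := (b, cond b (2 * x) x)

theorem algoIOPStep_fst (p : Bool × ℝ) : (algoIOPStep p).1 = !p.1 := by
  rcases p with ⟨_ | _, d⟩ <;> rfl

theorem algoIOPStep_algoIOPState (x : ℝ) (b : Bool) :
    algoIOPStep (algoIOPState x b) = algoIOPState x !b := by
  cases b <;> simp [algoIOPStep, algoIOPState]

section Run

variable {x : ℝ} {A : Set ℕ} {r : ℕ → Bool × ℝ}

theorem algoIOP_run_eq_algoIOPState (h0 : r 0 = (false, x))
    (hact : ∀ n ∈ A, r (n + 1) = algoIOPStep (r n)) (hidle : ∀ n ∉ A, r (n + 1) = r n) (n : ℕ) :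
    r n = algoIOPState x (r n).1 := by
  induction n with
  | zero => simp [h0, algoIOPState]
  | succ n ih =>
    by_cases hn : n ∈ A
    · rw [hact n hn, ih, algoIOPStep_algoIOPState]
      rfl
    · rwa [hidle n hn]

theorem algoIOP_run_oscillates (hx : 0 ≤ x) (hA : ∀ N, ∃ n, N ≤ n ∧ n ∈ A) (h0 : r 0 = (false, x))
    (hact : ∀ n ∈ A, r (n + 1) = algoIOPStep (r n)) (hidle : ∀ n ∉ A, r (n + 1) = r n) :
    ∃ t : ℕ → ℕ, StrictMono t ∧
      ∀ k : ℕ,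
        (r (t (2 * k))).2 = x ∧
        (r (t (2 * k + 1))).2 = 2 * x ∧
        MonotoneOn (fun n => (r n).2) (Set.Icc (t (2 * k)) (t (2 * k + 1))) ∧
        AntitoneOn (fun n => (r n).2) (Set.Icc (t (2 * k + 1)) (t (2 * k + 2))) := by
  have hflip (n : ℕ) (hn : n ∈ A) : (r (n + 1)).1 = !(r n).1 := by
    rw [hact n hn, algoIOPStep_fst]
  obtain ⟨t, ht, ht0, hne, hconst⟩ :=
    exists_strictMono_eqOn_Ico_of_frequently_ne _
      (Bool.exists_lt_ne_of_flip (c := fun n => (r n).1) hA hflip)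
  have hlight : ∀ j, (r (t j)).1 = decide (Odd j) :=
    Bool.eq_decide_odd_of_ne_succ (by simp [ht0, h0]) hne
  have hdist (n : ℕ) : (r n).2 = cond (r n).1 (2 * x) x :=
    congrArg Prod.snd (algoIOP_run_eq_algoIOPState h0 hact hidle n)
  have hdist_const (j : ℕ) : ∀ n ∈ Set.Ico (t j) (t (j + 1)), (r n).2 = (r (t j)).2 :=
    fun n hn => by rw [hdist n, hdist (t j), hconst j n hn]
  have heven (k : ℕ) : (r (t (2 * k))).2 = x := by
    simp [hdist, hlight, Nat.not_odd_iff_even.mpr (even_two_mul k)]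
  have hodd (k : ℕ) : (r (t (2 * k + 1))).2 = 2 * x := by simp [hdist, hlight]
  refine ⟨t, ht, fun k => ⟨heven k, hodd k, ?_, ?_⟩⟩
  · exact monotoneOn_Icc_of_eqOn_Ico (hdist_const _) (by rw [heven, hodd]; linarith)
  · refine antitoneOn_Icc_of_eqOn_Ico (hdist_const (2 * k + 1)) ?_
    rw [show 2 * k + 2 = 2 * (k + 1) by ring, heven, hodd]
    linarith

end Run

/-- Algorithm AlgoIOP solves the Independent Oscillating Problem in `FSTA`
under every fair schedule: each terminal robot's distance to the middle robot
oscillates between `x i` and `2 * x i` with the required monotonicity. -/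
theorem algoIOP_solves_IOP (x : Fin 2 → ℝ) (hx : ∀ i, 0 < x i)
    (σ : ℕ → Set (Fin 2))
    (hfair : ∀ (i : Fin 2) (N : ℕ), ∃ n : ℕ, N ≤ n ∧ i ∈ σ n)
    (s : Fin 2 → ℕ → Bool × ℝ)
    (h0 : ∀ i, s i 0 = (false, x i))
    (hact : ∀ i n, i ∈ σ n → s i (n + 1) = algoIOPStep (s i n))
    (hidle : ∀ i n, i ∉ σ n → s i (n + 1) = s i n) :
    ∀ i : Fin 2, ∃ t : ℕ → ℕ, StrictMono t ∧
      ∀ k : ℕ,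
        (s i (t (2 * k))).2 = x i ∧
        (s i (t (2 * k + 1))).2 = 2 * x i ∧
        MonotoneOn (fun n => (s i n).2) (Set.Icc (t (2 * k)) (t (2 * k + 1))) ∧
        AntitoneOn (fun n => (s i n).2) (Set.Icc (t (2 * k + 1)) (t (2 * k + 2))) :=
  fun i =>
    algoIOP_run_oscillates (A := {n | i ∈ σ n}) (hx i).le (hfair i) (h0 i) (hact i) (hidle i)
end
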